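/- arXiv:2301.11340 — 4 statements merged into one kernel-verified Lean document; each statement's English description precedes it below -/
import Mathlib

section
/- Let E : S(S⊗R) → S(S'⊗R') be a CPTP map on finite-dimensional systems, with Choi state C(E) = (I ⊗ E)|Φ⟩⟨Φ| on systems S̄R̄S'R', where |Φ⟩ is the normalised maximally entangled state on (S̄R̄, SR). Then S does not signal to R' in E (i.e., tr_{S'}∘E = tr_{S'}∘E∘(M⊗I_R) for all CPTP maps M on S) if and only if tr_{S'}[C(E)] = (𝟙_{S̄}/d_{S̄}) ⊗ tr_{S̄S'}[C(E)]. -/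
open Matrix BigOperators ComplexOrder

/-- The (unnormalised) Choi matrix of a map between matrix spaces. -/
noncomputable def choiOf {A B : Type*} [Fintype A] [DecidableEq A]
    (E : Matrix A A ℂ → Matrix B B ℂ) : Matrix (A × B) (A × B) ℂ :=
  Matrix.of fun p q => E (Matrix.single p.1 q.1 1) p.2 q.2

/-- A map is CPTP if it is linear, completely positive (positive semidefinite Choi
matrix, by Choi's theorem) and trace preserving. -/
def IsCPTP {A B : Type*} [Fintype A] [Fintype B] [DecidableEq A]
    (E : Matrix A A ℂ → Matrix B B ℂ) : Prop :=
  (∀ (c : ℂ) (ρ σ : Matrix A A ℂ), E (c • ρ + σ) = c • E ρ + E σ) ∧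
  (choiOf E).PosSemidef ∧
  (∀ ρ, (E ρ).trace = ρ.trace)

/-- Partial trace over the first tensor factor. -/
noncomputable def trFst {A X : Type*} [Fintype A]
    (ρ : Matrix (A × X) (A × X) ℂ) : Matrix X X ℂ :=
  Matrix.of fun x x' => ∑ a, ρ (a, x) (a, x')

/-- Partial trace over the second tensor factor. -/
noncomputable def trSnd {X A : Type*} [Fintype A]
    (ρ : Matrix (X × A) (X × A) ℂ) : Matrix X X ℂ :=
  Matrix.of fun x x' => ∑ a, ρ (x, a) (x', a)

/-- The extension `M ⊗ I` of a (linear) map `M` acting on the first tensor factor. -/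
noncomputable def lext {A B X : Type*} [Fintype A] [DecidableEq A]
    (M : Matrix A A ℂ → Matrix B B ℂ) (ρ : Matrix (A × X) (A × X) ℂ) :
    Matrix (B × X) (B × X) ℂ :=
  Matrix.of fun p q => ∑ a, ∑ a',
    M (Matrix.single a a' 1) p.1 q.1 * ρ (a, p.2) (a', q.2)

/-- The normalised Choi state `C(E) = (I ⊗ E)|Φ⟩⟨Φ|` of a map `E`, where `|Φ⟩` is the
normalised maximally entangled state.  It is indexed by `(S̄R̄) × (S'R')`. -/
noncomputable def choiState {A B : Type*} [Fintype A] [DecidableEq A]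
    (E : Matrix A A ℂ → Matrix B B ℂ) : Matrix (A × B) (A × B) ℂ :=
  ((Fintype.card A : ℂ))⁻¹ • choiOf E

/-! Both conditions say that `tr_{S'} ∘ E` is unchanged when the input is first passed through
`D ⊗ I`, where `D ρ = tr ρ • 𝟙 / d_S` is the completely depolarising channel: on the matrix
unit `|s r⟩⟨s₂ r₂|` the Choi condition is exactly this equation, and linearity extends it to
all inputs. Nonsignalling gives it because `D` is CPTP. Conversely,
`(D ⊗ I) ρ = 𝟙 / d_S ⊗ tr_S ρ` depends on `ρ` only through `tr_S ρ`, which `M ⊗ I` preserves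
for every trace-preserving `M`; hence `tr_{S'} E ρ = tr_{S'} E ((D ⊗ I) ρ) =
tr_{S'} E ((D ⊗ I) (M ⊗ I) ρ) = tr_{S'} E ((M ⊗ I) ρ)`. -/

open scoped Kronecker

theorem isLinearMap_of_map_smul_add {R M N : Type*} [Ring R] [AddCommGroup M] [AddCommGroup N]
    [Module R M] [Module R N] {f : M → N} (h : ∀ (c : R) (x y : M), f (c • x + y) = c • f x + f y) :
    IsLinearMap R f := by
  have map_zero : f 0 = 0 := by simpa using h 1 0 0
  exact ⟨fun x y => by simpa using h 1 x y, fun c x => by simpa [map_zero] using h c x 0⟩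

noncomputable def trFstLinearMap (A X : Type*) [Fintype A] :
    Matrix (A × X) (A × X) ℂ →ₗ[ℂ] Matrix X X ℂ where
  toFun := trFst
  map_add' ρ σ := by ext; simp [trFst, Finset.sum_add_distrib]
  map_smul' c ρ := by ext; simp [trFst, Finset.mul_sum]

noncomputable def lextLinearMap {A B : Type*} (X : Type*) [Fintype A] [DecidableEq A]
    (M : Matrix A A ℂ → Matrix B B ℂ) :
    Matrix (A × X) (A × X) ℂ →ₗ[ℂ] Matrix (B × X) (B × X) ℂ where
  toFun := lext M
  map_add' ρ σ := by ext; simp [lext, mul_add, Finset.sum_add_distrib]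
  map_smul' c ρ := by ext; simp [lext, Finset.mul_sum, mul_left_comm]

theorem trace_single {n R : Type*} [Fintype n] [DecidableEq n] [AddCommMonoid R]
    (i j : n) (c : R) : (single i j c).trace = if i = j then c else 0 := by
  split_ifs with h
  · exact h ▸ trace_single_eq_same i c
  · exact trace_single_eq_of_ne i j c h

theorem trFst_single {A X : Type*} [Fintype A] [DecidableEq A] [DecidableEq X]
    (a a' : A) (x x' : X) (c : ℂ) :
    trFst (single (a, x) (a', x') c) = if a = a' then single x x' c else 0 := by
  ext y y'
  rw [trFst, of_apply, Finset.sum_eq_single a]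
  · split_ifs with h
    · simp [h, single_apply]
    · simp [Ne.symm h]
  · intro b _ hb; simp [Ne.symm hb]
  · simp

theorem trFst_lext {A B X : Type*} [Fintype A] [DecidableEq A] [Fintype B]
    {M : Matrix A A ℂ → Matrix B B ℂ} (hM : ∀ ρ, (M ρ).trace = ρ.trace)
    (ρ : Matrix (A × X) (A × X) ℂ) : trFst (lext M ρ) = trFst ρ := by
  have htr : ∀ a a', ∑ b, M (single a a' 1) b b = if a = a' then 1 else 0 :=
    fun a a' => (hM _).trans (trace_single a a' 1)
  ext x x'
  simp only [trFst, lext, of_apply]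
  rw [Finset.sum_comm]
  refine Finset.sum_congr rfl fun a _ => ?_
  rw [Finset.sum_comm]
  simp [← Finset.sum_mul, htr]

noncomputable def replacementMap {A B : Type*} [Fintype A] (σ : Matrix B B ℂ) :
    Matrix A A ℂ → Matrix B B ℂ :=
  fun ρ => ρ.trace • σ

theorem choiOf_replacementMap {A B : Type*} [Fintype A] [DecidableEq A] (σ : Matrix B B ℂ) :
    choiOf (replacementMap (A := A) σ) = 1 ⊗ₖ σ := by
  ext ⟨a, b⟩ ⟨a', b'⟩
  simp [choiOf, replacementMap, trace_single, one_apply]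

theorem isCPTP_replacementMap {A B : Type*} [Fintype A] [DecidableEq A] [Fintype B]
    {σ : Matrix B B ℂ} (hσ : σ.PosSemidef) (htr : σ.trace = 1) :
    IsCPTP (replacementMap (A := A) σ) := by
  refine ⟨fun c ρ τ => ?_, ?_, fun ρ => ?_⟩
  · simp [replacementMap, add_smul, mul_smul]
  · rw [choiOf_replacementMap]
    exact PosSemidef.one.kronecker hσ
  · simp [replacementMap, htr]

theorem lext_replacementMap {A B X : Type*} [Fintype A] [DecidableEq A]
    (σ : Matrix B B ℂ) (ρ : Matrix (A × X) (A × X) ℂ) :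
    lext (replacementMap σ) ρ = σ ⊗ₖ trFst ρ := by
  ext ⟨b, x⟩ ⟨b', x'⟩
  simp [lext, replacementMap, trFst, trace_single, ite_mul, Finset.mul_sum]

theorem one_kronecker_single {A X : Type*} [Fintype A] [DecidableEq A] [DecidableEq X]
    (x x' : X) (c : ℂ) :
    (1 : Matrix A A ℂ) ⊗ₖ single x x' c = ∑ a, single (a, x) (a, x') c := by
  ext ⟨a, y⟩ ⟨a', y'⟩
  rw [Matrix.sum_apply, Finset.sum_eq_single a]
  · by_cases h : a = a' <;> simp [h, one_apply, single_apply]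
  · intro b _ hb; simp [hb]
  · simp

theorem sum_choiState_eq_trFst {A C X : Type*} [Fintype A] [DecidableEq A] [Fintype C]
    (E : Matrix A A ℂ → Matrix (C × X) (C × X) ℂ) (p q : A) (x x' : X) :
    ∑ c, choiState E (p, (c, x)) (q, (c, x')) =
      (Fintype.card A : ℂ)⁻¹ * trFst (E (single p q 1)) x x' := by
  simp [choiState, choiOf, trFst, Finset.mul_sum]

theorem lext_replacementMap_lext {A B C X : Type*} [Fintype A] [DecidableEq A]
    [Fintype B] [DecidableEq B] {M : Matrix A A ℂ → Matrix B B ℂ}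
    (hM : ∀ ρ, (M ρ).trace = ρ.trace) (σ : Matrix C C ℂ) (ρ : Matrix (A × X) (A × X) ℂ) :
    lext (replacementMap σ) (lext M ρ) = lext (replacementMap σ) ρ := by
  rw [lext_replacementMap, lext_replacementMap, trFst_lext hM]

noncomputable def depolarizing (A : Type*) [Fintype A] [DecidableEq A] :
    Matrix A A ℂ → Matrix A A ℂ :=
  replacementMap ((Fintype.card A : ℂ)⁻¹ • 1)

theorem isCPTP_depolarizing (A : Type*) [Fintype A] [DecidableEq A] [Nonempty A] :
    IsCPTP (depolarizing A) := by
  refine isCPTP_replacementMap (PosSemidef.one.smul ?_) ?_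
  · positivity
  · simp [trace_smul, Fintype.card_ne_zero]

theorem lext_depolarizing_single {A X : Type*} [Fintype A] [DecidableEq A] [DecidableEq X]
    (a a' : A) (x x' : X) :
    lext (depolarizing A) (single (a, x) (a', x') 1) =
      if a = a' then (Fintype.card A : ℂ)⁻¹ • ∑ u, single (u, x) (u, x') 1 else 0 := by
  rw [depolarizing, lext_replacementMap, trFst_single]
  split_ifs
  · rw [smul_kronecker, one_kronecker_single]
  · simp

theorem sum_choiState_eq_iff {S R S' R' : Type*} [Fintype S] [Fintype R] [Fintype S']
    [DecidableEq S] [DecidableEq R]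
    {E : Matrix (S × R) (S × R) ℂ → Matrix (S' × R') (S' × R') ℂ} (hE : IsLinearMap ℂ E)
    (s s₂ : S) (r r₂ : R) (r' r'₂ : R') :
    (∑ s' : S', choiState E ((s, r), (s', r')) ((s₂, r₂), (s', r'₂))) =
        (if s = s₂ then ((Fintype.card S : ℂ))⁻¹ else 0) *
          ∑ u : S, ∑ s' : S', choiState E ((u, r), (s', r')) ((u, r₂), (s', r'₂)) ↔
      trFst (E (single (s, r) (s₂, r₂) 1)) r' r'₂ =
        trFst (E (lext (depolarizing S) (single (s, r) (s₂, r₂) 1))) r' r'₂ := by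
  have : Nonempty (S × R) := ⟨(s, r)⟩
  have hc : (Fintype.card (S × R) : ℂ)⁻¹ ≠ 0 :=
    inv_ne_zero (Nat.cast_ne_zero.2 Fintype.card_ne_zero)
  have hdep : trFst (E (lext (depolarizing S) (single (s, r) (s₂, r₂) 1))) =
      if s = s₂ then (Fintype.card S : ℂ)⁻¹ • ∑ u, trFst (E (single (u, r) (u, r₂) 1))
      else 0 := by
    let F := trFstLinearMap S' R' ∘ₗ IsLinearMap.mk' E hE
    rw [lext_depolarizing_single]
    split_ifs
    · exact (F.map_smul _ _).trans (congrArg _ (map_sum F _ _))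
    · exact F.map_zero
  simp only [sum_choiState_eq_trFst, hdep, ← Finset.mul_sum]
  rw [mul_left_comm, mul_right_inj' hc]
  split_ifs <;> simp [Matrix.sum_apply]

theorem nonsignalling_iff_choi_general
    {S R S' R' : Type} [Fintype S] [Fintype R] [Fintype S'] [Fintype R']
    [DecidableEq S] [DecidableEq R]
    (E : Matrix (S × R) (S × R) ℂ → Matrix (S' × R') (S' × R') ℂ)
    (hE : IsCPTP E) :
    (∀ M : Matrix S S ℂ → Matrix S S ℂ, IsCPTP M →
        ∀ ρ, trFst (E ρ) = trFst (E (lext M ρ))) ↔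
    (∀ (s s₂ : S) (r r₂ : R) (r' r'₂ : R'),
      (∑ s' : S', choiState E ((s, r), (s', r')) ((s₂, r₂), (s', r'₂))) =
        (if s = s₂ then ((Fintype.card S : ℂ))⁻¹ else 0) *
          ∑ u : S, ∑ s' : S',
            choiState E ((u, r), (s', r')) ((u, r₂), (s', r'₂))) := by
  have hlin := isLinearMap_of_map_smul_add hE.1
  constructor
  · intro hns s s₂ r r₂ r' r'₂
    have : Nonempty S := ⟨s⟩
    exact (sum_choiState_eq_iff hlin ..).2 (congrFun₂ (hns _ (isCPTP_depolarizing S) _) r' r'₂)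
  · intro hchoi M hM ρ
    set F := trFstLinearMap S' R' ∘ₗ IsLinearMap.mk' E hlin
    have hF : F = F ∘ₗ lextLinearMap R (depolarizing S) := Matrix.ext_linearMap ℂ fun p q =>
      LinearMap.ext_ring <| by ext r' r'₂; exact (sum_choiState_eq_iff hlin ..).1 (hchoi ..)
    calc trFst (E ρ) = F (lext (depolarizing S) ρ) := LinearMap.congr_fun hF ρ
      _ = F (lext (depolarizing S) (lext M ρ)) := by
        rw [depolarizing, lext_replacementMap_lext hM.2.2]
      _ = trFst (E (lext M ρ)) := (LinearMap.congr_fun hF _).symm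

/-- For a CPTP map `E : S(S⊗R) → S(S'⊗R')` on finite-dimensional
systems, `S` does not signal to `R'` (i.e. `tr_{S'}∘E = tr_{S'}∘E∘(M⊗I_R)` for all CPTP
maps `M` on `S`) if and only if
`tr_{S'}[C(E)] = (𝟙_{S̄}/d_{S̄}) ⊗ tr_{S̄S'}[C(E)]`, stated entrywise: for all
`s s₂ : S`, `r r₂ : R`, `r' r'₂ : R'`,
`(tr_{S'} C(E)) ((s,r),r') ((s₂,r₂),r'₂) = δ_{s s₂}/d_S · (tr_{S̄S'} C(E)) (r,r') (r₂,r'₂)`. -/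
theorem nonsignalling_iff_choi
    {S R S' R' : Type} [Fintype S] [Fintype R] [Fintype S'] [Fintype R']
    [DecidableEq S] [DecidableEq R] [DecidableEq S'] [DecidableEq R']
    (E : Matrix (S × R) (S × R) ℂ → Matrix (S' × R') (S' × R') ℂ)
    (hE : IsCPTP E) :
    (∀ M : Matrix S S ℂ → Matrix S S ℂ, IsCPTP M →
        ∀ ρ, trFst (E ρ) = trFst (E (lext M ρ))) ↔
    (∀ (s s₂ : S) (r r₂ : R) (r' r'₂ : R'),
      (∑ s' : S', choiState E ((s, r), (s', r')) ((s₂, r₂), (s', r'₂))) =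
        (if s = s₂ then ((Fintype.card S : ℂ))⁻¹ else 0) *
          ∑ u : S, ∑ s' : S',
            choiState E ((u, r), (s', r')) ((u, r₂), (s', r'₂))) :=
  nonsignalling_iff_choi_general E hE
end

section
/- If B does not signal to C in a CPTP map E : S(A⊗B) → S(C⊗D) on finite-dimensional systems, then there exist a finite-dimensional system Q and CPTP maps E₁ : S(A) → S(C⊗Q), E₂ : S(Q⊗B) → S(D) such that E = (I_C ⊗ E₂) ∘ (E₁ ⊗ I_B). -/
/-!
The Choi matrix of `E` yields Kraus operators `V s : A ⊗ B → C ⊗ D`, and a Kraus decomposition of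
`F` yields a Stinespring operator `K₁ : A → C ⊗ Q` with `tr_Q (K₁ ρ K₁ᴴ) = F ρ`. By non-signalling,
`K = K₁ ⊗ 1_B` and the family `V` have the same marginal on `C`. Writing `Ṽ s`, `K̃` for these
operators with their `C` output moved to the input side, this is the equality of Gram matrices
`∑ Ṽ sᴴ Ṽ s = K̃ᴴ K̃`, so with a pseudo-inverse of `K̃ᴴ K̃` one finds contractions `T s` with
`T s K̃ = Ṽ s`. Completed by the projection onto the orthogonal complement of the range of `K̃`,
they are the Kraus operators of a channel `E₂ : Q ⊗ B → D` with `(I_C ⊗ E₂)(K ρ Kᴴ) = E ρ`.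
-/

open Matrix BigOperators ComplexOrder

/-- The extension `I ⊗ M` of a (linear) map `M` acting on the second tensor factor. -/
noncomputable def rext {A B X : Type*} [Fintype A] [DecidableEq A]
    (M : Matrix A A ℂ → Matrix B B ℂ) (ρ : Matrix (X × A) (X × A) ℂ) :
    Matrix (X × B) (X × B) ℂ :=
  Matrix.of fun p q => ∑ a, ∑ a',
    M (Matrix.single a a' 1) p.2 q.2 * ρ (p.1, a) (q.1, a')

open Kronecker

noncomputable def krausMap {X Y ι : Type*} [Fintype X] [Fintype ι]
    (K : ι → Matrix Y X ℂ) (ρ : Matrix X X ℂ) : Matrix Y Y ℂ :=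
  ∑ i, K i * ρ * (K i)ᴴ

section Kraus

variable {X Y ι : Type*} [Fintype X] [Fintype ι] (K : ι → Matrix Y X ℂ)

lemma krausMap_smul_add (c : ℂ) (ρ σ : Matrix X X ℂ) :
    krausMap K (c • ρ + σ) = c • krausMap K ρ + krausMap K σ := by
  simp only [krausMap, Matrix.mul_add, Matrix.add_mul, Matrix.mul_smul, Matrix.smul_mul,
    Finset.sum_add_distrib, Finset.smul_sum]

lemma krausMap_apply [Fintype Y] (ρ : Matrix X X ℂ) (y y' : Y) :
    krausMap K ρ y y' = ∑ i, ∑ x, ∑ x', K i y x * ρ x x' * star (K i y' x') := by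
  simp only [krausMap, Matrix.sum_apply, Matrix.mul_apply, Matrix.conjTranspose_apply,
    Finset.sum_mul, RCLike.star_def]
  exact Finset.sum_congr rfl fun i _ => Finset.sum_comm

lemma krausMap_single_apply [DecidableEq X] (x x' : X) (y y' : Y) :
    krausMap K (Matrix.single x x' 1) y y' = ∑ i, K i y x * star (K i y' x') := by
  simp [krausMap, Matrix.sum_apply, Matrix.mul_apply, Matrix.single, ite_and]

lemma krausMap_unique [Unique ι] (ρ : Matrix X X ℂ) :
    krausMap K ρ = K default * ρ * (K default)ᴴ :=
  Fintype.sum_unique _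

lemma krausMap_comp_equiv {κ : Type*} [Fintype κ] (e : κ ≃ ι) : krausMap (K ∘ e) = krausMap K :=
  funext fun ρ => e.sum_comp fun i => K i * ρ * (K i)ᴴ

lemma krausMap_mul_mul_conjTranspose {Z : Type*} [Fintype Z] (L : Matrix X Z ℂ)
    (ρ : Matrix Z Z ℂ) : krausMap K (L * ρ * Lᴴ) = krausMap (fun i => K i * L) ρ := by
  simp only [krausMap, Matrix.conjTranspose_mul, Matrix.mul_assoc]

lemma reindex_krausMap [Fintype Y] {Y' : Type*} [Fintype Y'] (e : Y ≃ Y') (ρ : Matrix X X ℂ) :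
    Matrix.reindex e e (krausMap K ρ) =
      krausMap (fun i => Matrix.reindex e (Equiv.refl X) (K i)) ρ := by
  ext y y'
  simp [krausMap_apply]

lemma choiOf_krausMap_posSemidef [Fintype Y] [DecidableEq X] :
    (choiOf (krausMap K)).PosSemidef := by
  have hchoi : choiOf (krausMap K) =
      ∑ i, vecMulVec (fun p : X × Y => K i p.2 p.1) (star fun p : X × Y => K i p.2 p.1) := by
    ext p p'
    simp [choiOf, krausMap_single_apply, Matrix.sum_apply, vecMulVec_apply]
  rw [hchoi]
  exact Matrix.posSemidef_sum _ fun i _ => posSemidef_vecMulVec_self_star _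

lemma trace_krausMap [Fintype Y] (ρ : Matrix X X ℂ) :
    (krausMap K ρ).trace = ((∑ i, (K i)ᴴ * K i) * ρ).trace := by
  simp only [krausMap, Matrix.trace_sum, Matrix.sum_mul]
  refine Finset.sum_congr rfl fun i _ => ?_
  rw [Matrix.trace_mul_comm, ← Matrix.mul_assoc]

lemma isCPTP_krausMap [Fintype Y] [DecidableEq X] (hK : ∑ i, (K i)ᴴ * K i = 1) :
    IsCPTP (krausMap K) :=
  ⟨krausMap_smul_add K, choiOf_krausMap_posSemidef K,
    fun ρ => by rw [trace_krausMap, hK, Matrix.one_mul]⟩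

lemma sum_conjTranspose_mul_self_eq_one_of_trace_krausMap [Fintype Y] [DecidableEq X]
    (hK : ∀ ρ, (krausMap K ρ).trace = ρ.trace) : ∑ i, (K i)ᴴ * K i = 1 := by
  ext x x'
  have h := hK (Matrix.single x' x 1)
  rw [trace_krausMap, Matrix.trace_mul_single] at h
  by_cases hx : x = x'
  · subst hx; simpa using h
  · simpa [hx, Matrix.trace_single_eq_of_ne _ _ _ (Ne.symm hx)] using h

end Kraus

lemma isEmpty_of_isCPTP {X Y : Type*} [Fintype X] [DecidableEq X] [Fintype Y] [IsEmpty Y]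
    {E : Matrix X X ℂ → Matrix Y Y ℂ} (hE : IsCPTP E) : IsEmpty X := by
  have htrace := hE.2.2 1
  rw [Matrix.trace_one, Subsingleton.elim (E 1) 0, Matrix.trace_zero] at htrace
  exact Fintype.card_eq_zero_iff.mp (by exact_mod_cast htrace.symm)

section Choi

variable {X Y : Type*} [Fintype X] [DecidableEq X] {E E' : Matrix X X ℂ → Matrix Y Y ℂ}

lemma eq_sum_single_of_smul_add
    (hE : ∀ (c : ℂ) (ρ σ : Matrix X X ℂ), E (c • ρ + σ) = c • E ρ + E σ) (ρ : Matrix X X ℂ) :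
    E ρ = ∑ x, ∑ x', ρ x x' • E (Matrix.single x x' 1) := by
  have hzero : E 0 = 0 := by simpa using hE 1 0 0
  let L : Matrix X X ℂ →ₗ[ℂ] Matrix Y Y ℂ :=
    { toFun := E
      map_add' := fun ρ σ => by simpa using hE 1 ρ σ
      map_smul' := fun c ρ => by simpa [hzero] using hE c ρ 0 }
  have hρ : ∑ x, ∑ x', ρ x x' • Matrix.single x x' 1 = ρ := by
    simp only [Matrix.smul_single, smul_eq_mul, mul_one]
    exact (Matrix.matrix_eq_sum_single ρ).symm
  calc E ρ = L (∑ x, ∑ x', ρ x x' • Matrix.single x x' 1) := by rw [hρ]; rfl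
    _ = _ := by simp only [map_sum, map_smul]; rfl

lemma eq_of_smul_add_of_single
    (hE : ∀ (c : ℂ) (ρ σ : Matrix X X ℂ), E (c • ρ + σ) = c • E ρ + E σ)
    (hE' : ∀ (c : ℂ) (ρ σ : Matrix X X ℂ), E' (c • ρ + σ) = c • E' ρ + E' σ)
    (h : ∀ x x', E (Matrix.single x x' 1) = E' (Matrix.single x x' 1)) : E = E' :=
  funext fun ρ => by
    rw [eq_sum_single_of_smul_add hE, eq_sum_single_of_smul_add hE']
    simp only [h]

open scoped MatrixOrder in
theorem exists_krausMap_eq_of_choiOf_posSemidef [Fintype Y]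
    (hE : ∀ (c : ℂ) (ρ σ : Matrix X X ℂ), E (c • ρ + σ) = c • E ρ + E σ)
    (hchoi : (choiOf E).PosSemidef) :
    ∃ K : Fin (Fintype.card (X × Y)) → Matrix Y X ℂ, E = krausMap K := by
  classical
  obtain ⟨B, hB⟩ := CStarAlgebra.nonneg_iff_eq_star_mul_self.mp hchoi.nonneg
  let K : X × Y → Matrix Y X ℂ := fun s => Matrix.of fun y x => star (B s (x, y))
  refine ⟨K ∘ (Fintype.equivFin (X × Y)).symm, ?_⟩
  rw [krausMap_comp_equiv]
  refine eq_of_smul_add_of_single hE (krausMap_smul_add K) fun x x' => ?_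
  ext y y'
  have hentry := congr_fun (congr_fun hB (x, y)) (x', y')
  simp only [choiOf, Matrix.of_apply] at hentry
  simp [hentry, krausMap_single_apply, K, Matrix.mul_apply, Matrix.star_eq_conjTranspose]

end Choi

section Extension

variable {X Y W ι : Type*} [Fintype X] [DecidableEq X] [Fintype Y] [Fintype W] [DecidableEq W]
  [Fintype ι] (K : ι → Matrix Y X ℂ)

lemma lext_krausMap (ρ : Matrix (X × W) (X × W) ℂ) :
    lext (krausMap K) ρ = krausMap (fun i => K i ⊗ₖ (1 : Matrix W W ℂ)) ρ := by
  ext ⟨y, w⟩ ⟨y', w'⟩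
  simp only [lext, Matrix.of_apply, krausMap_single_apply]
  simp [krausMap_apply, Matrix.kroneckerMap_apply, Matrix.one_apply, Fintype.sum_prod_type,
    Finset.sum_mul, ite_mul, mul_ite, apply_ite (starRingEnd ℂ)]
  refine (Finset.sum_congr rfl fun a _ => Finset.sum_comm).trans (Finset.sum_comm.trans ?_)
  exact Finset.sum_congr rfl fun i _ => Finset.sum_congr rfl fun a _ =>
    Finset.sum_congr rfl fun a' _ => by ring

lemma rext_krausMap (ρ : Matrix (W × X) (W × X) ℂ) :
    rext (krausMap K) ρ = krausMap (fun i => (1 : Matrix W W ℂ) ⊗ₖ K i) ρ := by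
  ext ⟨w, y⟩ ⟨w', y'⟩
  simp only [rext, Matrix.of_apply, krausMap_single_apply]
  simp [krausMap_apply, Matrix.kroneckerMap_apply, Matrix.one_apply, Fintype.sum_prod_type,
    Finset.sum_mul, ite_mul, mul_ite, apply_ite (starRingEnd ℂ)]
  refine (Finset.sum_congr rfl fun a _ => Finset.sum_comm).trans (Finset.sum_comm.trans ?_)
  exact Finset.sum_congr rfl fun i _ => Finset.sum_congr rfl fun a _ =>
    Finset.sum_congr rfl fun a' _ => by ring

omit [DecidableEq X] in
lemma trSnd_krausMap_kronecker_one (ρ : Matrix (X × W) (X × W) ℂ) :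
    trSnd (krausMap (fun i => K i ⊗ₖ (1 : Matrix W W ℂ)) ρ) = krausMap K (trSnd ρ) := by
  ext y y'
  simp [trSnd, krausMap_apply, Matrix.kroneckerMap_apply, Matrix.one_apply,
    Fintype.sum_prod_type, Finset.sum_mul, Finset.mul_sum, ite_mul, mul_ite,
    apply_ite (starRingEnd ℂ)]
  exact Finset.sum_comm.trans (Finset.sum_congr rfl fun i _ =>
    Finset.sum_comm.trans (Finset.sum_congr rfl fun a _ => Finset.sum_comm))

end Extension

lemma trSnd_reindex_prodAssoc {C Q B : Type*} [Fintype Q] [Fintype B]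
    (σ : Matrix ((C × Q) × B) ((C × Q) × B) ℂ) :
    trSnd (Matrix.reindex (Equiv.prodAssoc C Q B) (Equiv.prodAssoc C Q B) σ) =
      trSnd (trSnd σ) := by
  ext c c'
  simp [trSnd, Fintype.sum_prod_type]

section Dilation

variable {X Y ι : Type*} [Fintype Y] [Fintype ι] (L : ι → Matrix Y X ℂ)

-- the Stinespring operator `∑ i, L i ⊗ |i⟩`
def krausDilation : Matrix (Y × ι) X ℂ := Matrix.of fun p x => L p.2 p.1 x

lemma conjTranspose_krausDilation_mul_self :
    (krausDilation L)ᴴ * krausDilation L = ∑ i, (L i)ᴴ * L i := by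
  ext x x'
  simp [krausDilation, Matrix.mul_apply, Matrix.sum_apply, Fintype.sum_prod_type]
  exact Finset.sum_comm

lemma trSnd_krausDilation_mul_mul_conjTranspose [Fintype X] (ρ : Matrix X X ℂ) :
    trSnd (krausDilation L * ρ * (krausDilation L)ᴴ) = krausMap L ρ := by
  ext y y'
  simp [trSnd, krausDilation, krausMap_apply, Matrix.mul_apply, Finset.sum_mul]
  exact Finset.sum_congr rfl fun i _ => Finset.sum_comm

end Dilation

section Contraction

variable {m n k ι : Type*} [Fintype n]

lemma Matrix.IsHermitian.exists_pseudoInverse [DecidableEq n] {P : Matrix n n ℂ}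
    (hP : P.IsHermitian) :
    ∃ P' : Matrix n n ℂ, P'.IsHermitian ∧ P * P' * P = P ∧ P' * P * P' = P' := by
  have hsa : IsSelfAdjoint P := hP
  have hmul (f g : ℝ → ℝ) : cfc f P * cfc g P = cfc (fun x => f x * g x) P :=
    (cfc_mul f g P (P.finite_real_spectrum.continuousOn f)
      (P.finite_real_spectrum.continuousOn g)).symm
  have hid : cfc (fun x : ℝ => x) P = P := cfc_id' ℝ P
  -- as `0⁻¹ = 0`, the function `x ↦ x⁻¹` inverts `P` on its range and vanishes on its kernel
  refine ⟨cfc (fun x : ℝ => x⁻¹) P, cfc_predicate _ P, ?_, ?_⟩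
  · calc P * cfc (fun x : ℝ => x⁻¹) P * P
        = cfc (fun x : ℝ => x) P * cfc (fun x : ℝ => x⁻¹) P * cfc (fun x : ℝ => x) P := by
          rw [hid]
      _ = P := by rw [hmul, hmul]; simp only [mul_inv_mul_cancel, hid]
  · calc cfc (fun x : ℝ => x⁻¹) P * P * cfc (fun x : ℝ => x⁻¹) P
        = cfc (fun x : ℝ => x⁻¹) P * cfc (fun x : ℝ => x) P * cfc (fun x : ℝ => x⁻¹) P := by
          rw [hid]
      _ = cfc (fun x : ℝ => x⁻¹) P := by
          rw [hmul, hmul]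
          congr 1
          funext x
          simpa using mul_inv_mul_cancel x⁻¹

lemma sum_conjTranspose_mul_self_eq_zero_iff [Fintype ι] [Fintype k] {Z : ι → Matrix k n ℂ} :
    ∑ i, (Z i)ᴴ * Z i = 0 ↔ ∀ i, Z i = 0 := by
  refine ⟨fun h i => ?_, fun h => by simp [h]⟩
  have htrace : ∑ i, ((Z i)ᴴ * Z i).trace = 0 := by
    rw [← Matrix.trace_sum, h, Matrix.trace_zero]
  rw [Finset.sum_eq_zero_iff_of_nonneg fun i _ =>
    (Matrix.posSemidef_conjTranspose_mul_self (Z i)).trace_nonneg] at htrace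
  exact Matrix.trace_conjTranspose_mul_self_eq_zero_iff.mp (htrace i (Finset.mem_univ i))

lemma mul_mul_eq_self_of_sum_conjTranspose_mul_self_eq [DecidableEq n] [Fintype ι] [Fintype k]
    {P P' : Matrix n n ℂ} (hP : P * P' * P = P) {Z : ι → Matrix k n ℂ}
    (hZ : ∑ i, (Z i)ᴴ * Z i = P) (i : ι) : Z i * (P' * P) = Z i := by
  set Q := 1 - P' * P
  have hker : P * Q = 0 := by
    rw [Matrix.mul_sub, Matrix.mul_one, ← Matrix.mul_assoc, hP, sub_self]
  have hzero : ∑ i, (Z i * Q)ᴴ * (Z i * Q) = 0 :=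
    calc ∑ i, (Z i * Q)ᴴ * (Z i * Q) = Qᴴ * (∑ i, (Z i)ᴴ * Z i) * Q := by
          simp only [Matrix.conjTranspose_mul, Matrix.mul_sum, Matrix.sum_mul, Matrix.mul_assoc]
      _ = 0 := by rw [hZ, Matrix.mul_assoc, hker, Matrix.mul_zero]
  have := sum_conjTranspose_mul_self_eq_zero_iff.mp hzero i
  rwa [Matrix.mul_sub, Matrix.mul_one, sub_eq_zero, eq_comm] at this

theorem exists_contraction_of_sum_conjTranspose_mul_self_eq [Fintype m] [DecidableEq m]
    [DecidableEq n] {D S : Type*} [Fintype D] [Fintype S]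
    (X : Matrix m n ℂ) (Y : S → Matrix D n ℂ) (hXY : ∑ s, (Y s)ᴴ * Y s = Xᴴ * X) :
    ∃ (T : S → Matrix D m ℂ) (N : Matrix m m ℂ),
      (∀ s, T s * X = Y s) ∧ N * X = 0 ∧ ∑ s, (T s)ᴴ * T s + Nᴴ * N = 1 := by
  obtain ⟨P', hP'h, hPP'P, hP'PP'⟩ :=
    (Matrix.isHermitian_conjTranspose_mul_self X).exists_pseudoInverse
  have hY := mul_mul_eq_self_of_sum_conjTranspose_mul_self_eq hPP'P hXY
  have hX := mul_mul_eq_self_of_sum_conjTranspose_mul_self_eq hPP'P (Z := fun _ : Unit => X)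
    (Fintype.sum_unique _) ()
  -- `M` is the orthogonal projection onto the range of `X`
  set M := X * P' * Xᴴ with hM
  have hMh : Mᴴ = M := by
    rw [hM, Matrix.conjTranspose_mul, Matrix.conjTranspose_mul,
      Matrix.conjTranspose_conjTranspose, hP'h.eq, Matrix.mul_assoc]
  have hMM : M * M = M :=
    calc M * M = X * (P' * (Xᴴ * X) * P') * Xᴴ := by simp only [hM, Matrix.mul_assoc]
      _ = M := by rw [hP'PP', hM]
  refine ⟨fun s => Y s * P' * Xᴴ, 1 - M, fun s => ?_, ?_, ?_⟩
  · simpa only [Matrix.mul_assoc] using hY s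
  · simpa only [Matrix.sub_mul, Matrix.one_mul, hM, Matrix.mul_assoc, sub_eq_zero] using hX.symm
  · have hT : ∑ s, (Y s * P' * Xᴴ)ᴴ * (Y s * P' * Xᴴ) = M :=
      calc ∑ s, (Y s * P' * Xᴴ)ᴴ * (Y s * P' * Xᴴ)
          = X * P' * (∑ s, (Y s)ᴴ * Y s) * P' * Xᴴ := by
            simp only [Matrix.conjTranspose_mul, Matrix.conjTranspose_conjTranspose, hP'h.eq,
              Matrix.mul_sum, Matrix.sum_mul, Matrix.mul_assoc]
        _ = X * (P' * (Xᴴ * X) * P') * Xᴴ := by rw [hXY]; simp only [Matrix.mul_assoc]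
        _ = M := by rw [hP'PP', hM]
    rw [hT, Matrix.conjTranspose_sub, Matrix.conjTranspose_one, hMh, Matrix.sub_mul,
      Matrix.one_mul, Matrix.mul_sub, Matrix.mul_one, hMM]
    abel

end Contraction

section Factorization

variable {C D m n : Type*}

def rowFstToCol (V : Matrix (C × D) n ℂ) : Matrix D (C × n) ℂ :=
  Matrix.of fun d p => V (p.1, d) p.2

lemma rowFstToCol_injective : Function.Injective (rowFstToCol (C := C) (D := D) (n := n)) :=
  fun _ _ h => Matrix.ext fun p x => congr_fun (congr_fun h p.2) (p.1, x)

lemma rowFstToCol_one_kronecker_mul [Fintype C] [DecidableEq C] [Fintype m]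
    (W : Matrix D m ℂ) (Z : Matrix (C × m) n ℂ) :
    rowFstToCol (((1 : Matrix C C ℂ) ⊗ₖ W) * Z) = W * rowFstToCol Z := by
  ext d ⟨c, x⟩
  simp [rowFstToCol, Matrix.mul_apply, Matrix.kroneckerMap_apply, Matrix.one_apply,
    Fintype.sum_prod_type, ite_mul]

lemma sum_conjTranspose_rowFstToCol_mul_self [Fintype D] [Fintype n] [DecidableEq n] {S : Type*}
    [Fintype S] (V : S → Matrix (C × D) n ℂ) :
    ∑ s, (rowFstToCol (V s))ᴴ * rowFstToCol (V s) =
      Matrix.of fun p p' => trSnd (krausMap V (Matrix.single p'.2 p.2 1)) p'.1 p.1 := by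
  ext ⟨c, x⟩ ⟨c', x'⟩
  simp [rowFstToCol, trSnd, krausMap_single_apply, Matrix.sum_apply, Matrix.mul_apply]
  exact Finset.sum_comm.trans (Finset.sum_congr rfl fun d _ =>
    Finset.sum_congr rfl fun s _ => mul_comm _ _)

theorem exists_channel_of_trSnd_eq [Fintype C] [Fintype D] [Nonempty D] [Fintype m]
    [DecidableEq m] [Fintype n] {S : Type*} [Fintype S]
    (K : Matrix (C × m) n ℂ) (V : S → Matrix (C × D) n ℂ)
    (hKV : ∀ ρ, trSnd (K * ρ * Kᴴ) = trSnd (krausMap V ρ)) :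
    ∃ W : S ⊕ m → Matrix D m ℂ,
      ∑ j, (W j)ᴴ * W j = 1 ∧ ∀ ρ, rext (krausMap W) (K * ρ * Kᴴ) = krausMap V ρ := by
  classical
  obtain ⟨d₀⟩ := ‹Nonempty D›
  have hgram : ∑ s, (rowFstToCol (V s))ᴴ * rowFstToCol (V s) =
      (rowFstToCol K)ᴴ * rowFstToCol K := by
    have hK := sum_conjTranspose_rowFstToCol_mul_self fun _ : Unit => K
    simp only [Fintype.sum_unique, krausMap_unique] at hK
    simp only [hK, sum_conjTranspose_rowFstToCol_mul_self, hKV]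
  obtain ⟨T, N, hT, hN, hTN⟩ := exists_contraction_of_sum_conjTranspose_mul_self_eq
    (rowFstToCol K) (fun s => rowFstToCol (V s)) hgram
  -- `N` vanishes on the range of `rowFstToCol K`, so its output may be sent anywhere, e.g. to `d₀`
  refine ⟨Sum.elim T fun k => Matrix.single d₀ k (1 : ℂ) * N, ?_, fun ρ => ?_⟩
  · have hcompl :
        ∑ k : m, (Matrix.single d₀ k (1 : ℂ) * N)ᴴ * (Matrix.single d₀ k (1 : ℂ) * N) =
          Nᴴ * N := by
      ext u u'
      simp [Matrix.mul_apply, Matrix.sum_apply, Matrix.single, ite_and]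
    rw [Fintype.sum_sum_type, ← hTN]
    simp only [Sum.elim_inl, Sum.elim_inr, hcompl]
  · have hinl (s : S) : ((1 : Matrix C C ℂ) ⊗ₖ T s) * K = V s :=
      rowFstToCol_injective (by rw [rowFstToCol_one_kronecker_mul, hT])
    have hinr (k : m) : ((1 : Matrix C C ℂ) ⊗ₖ (Matrix.single d₀ k (1 : ℂ) * N)) * K = 0 :=
      rowFstToCol_injective (by
        rw [rowFstToCol_one_kronecker_mul, Matrix.mul_assoc, hN, Matrix.mul_zero]; rfl)
    rw [rext_krausMap, krausMap_mul_mul_conjTranspose]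
    simp only [krausMap, Fintype.sum_sum_type, Sum.elim_inl, Sum.elim_inr, hinl, hinr,
      Matrix.zero_mul, Finset.sum_const_zero, add_zero]

end Factorization

theorem oneway_signalling_decomposition_general
    {A B C D : Type} [Fintype A] [Fintype B] [Fintype C] [Fintype D]
    [DecidableEq A] [DecidableEq B]
    (E : Matrix (A × B) (A × B) ℂ → Matrix (C × D) (C × D) ℂ)
    (hE : IsCPTP E)
    (hns : ∃ F : Matrix A A ℂ → Matrix C C ℂ, IsCPTP F ∧
        ∀ ρ, trSnd (E ρ) = F (trSnd ρ)) :
    ∃ (q : ℕ)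
      (E₁ : Matrix A A ℂ → Matrix (C × Fin q) (C × Fin q) ℂ)
      (E₂ : Matrix (Fin q × B) (Fin q × B) ℂ → Matrix D D ℂ),
      IsCPTP E₁ ∧ IsCPTP E₂ ∧
      ∀ ρ, E ρ =
        rext E₂ ((Matrix.reindex (Equiv.prodAssoc C (Fin q) B) (Equiv.prodAssoc C (Fin q) B))
          (lext E₁ ρ)) := by
  obtain ⟨F, hF, hEF⟩ := hns
  obtain ⟨L, rfl⟩ := exists_krausMap_eq_of_choiOf_posSemidef hF.1 hF.2.1
  let E₁ := krausMap fun _ : Unit => krausDilation L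
  have hE₁ : IsCPTP E₁ := isCPTP_krausMap _ (by
    rw [Fintype.sum_unique, conjTranspose_krausDilation_mul_self,
      sum_conjTranspose_mul_self_eq_one_of_trace_krausMap L hF.2.2])
  let e := Equiv.prodAssoc C (Fin (Fintype.card (A × C))) B
  let K := Matrix.reindex e (Equiv.refl (A × B)) (krausDilation L ⊗ₖ (1 : Matrix B B ℂ))
  have hK (ρ) : Matrix.reindex e e (lext E₁ ρ) = K * ρ * Kᴴ := by
    rw [lext_krausMap, reindex_krausMap, krausMap_unique]
  have hKE (ρ) : trSnd (K * ρ * Kᴴ) = trSnd (E ρ) := by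
    rw [← hK, trSnd_reindex_prodAssoc, lext_krausMap, trSnd_krausMap_kronecker_one,
      krausMap_unique, trSnd_krausDilation_mul_mul_conjTranspose, hEF]
  rcases isEmpty_or_nonempty D with hD | hD
  · have : IsEmpty (Fin (Fintype.card (A × C)) × B) := Fintype.card_eq_zero_iff.mp (by
      rcases isEmpty_prod.mp (isEmpty_of_isCPTP hE) with hA | hB <;> simp)
    exact ⟨_, E₁, krausMap fun _ : Unit => 0, hE₁, isCPTP_krausMap _ (Subsingleton.elim _ _),
      fun ρ => Subsingleton.elim _ _⟩
  · obtain ⟨V, rfl⟩ := exists_krausMap_eq_of_choiOf_posSemidef hE.1 hE.2.1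
    obtain ⟨W, hW, hWV⟩ := exists_channel_of_trSnd_eq K V hKE
    exact ⟨_, E₁, krausMap W, hE₁, isCPTP_krausMap W hW, fun ρ => by rw [hK, hWV]⟩

/-- If `B` does not signal to `C` in a CPTP map
`E : S(A⊗B) → S(C⊗D)` (i.e. `tr_D ∘ E = F ∘ tr_B` for some CPTP `F`), then there
exist a finite-dimensional system `Q` and CPTP maps `E₁ : S(A) → S(C⊗Q)`,
`E₂ : S(Q⊗B) → S(D)` with `E = (I_C ⊗ E₂) ∘ (E₁ ⊗ I_B)`. -/
theorem oneway_signalling_decomposition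
    {A B C D : Type} [Fintype A] [Fintype B] [Fintype C] [Fintype D]
    [DecidableEq A] [DecidableEq B] [DecidableEq C] [DecidableEq D]
    (E : Matrix (A × B) (A × B) ℂ → Matrix (C × D) (C × D) ℂ)
    (hE : IsCPTP E)
    (hns : ∃ F : Matrix A A ℂ → Matrix C C ℂ, IsCPTP F ∧
        ∀ ρ, trSnd (E ρ) = F (trSnd ρ)) :
    ∃ (q : ℕ)
      (E₁ : Matrix A A ℂ → Matrix (C × Fin q) (C × Fin q) ℂ)
      (E₂ : Matrix (Fin q × B) (Fin q × B) ℂ → Matrix D D ℂ),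
      IsCPTP E₁ ∧ IsCPTP E₂ ∧
      ∀ ρ, E ρ =
        rext E₂ ((Matrix.reindex (Equiv.prodAssoc C (Fin q) B) (Equiv.prodAssoc C (Fin q) B))
          (lext E₁ ρ)) :=
  oneway_signalling_decomposition_general E hE hns
end

section
/- Define Kraus operators K⁽⁰⁾ = |00⟩⟨0,0| and, for each N ≥ 1, odd k ≤ N and even l ≤ N, K⁽ᴺ⁾ₖ,ₗ = (√2/√(2^N)) ( √C(N,l) |01⟩⟨N−k, k| + √C(N,k) |10⟩⟨N−l, l| ), mapping the two-mode Fock space to a two-qubit space. Then Σ K*K over all these Kraus operators equals the identity on the Fock space, i.e., the associated map Λ(ρ) = K⁽⁰⁾ρK⁽⁰⁾* + Σ_{N,k,l} K⁽ᴺ⁾ₖ,ₗ ρ (K⁽ᴺ⁾ₖ,ₗ)* is trace-preserving. -/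
/-! Each `K⁽ᴺ⁾ₖ,ₗ` has a single nonzero entry in each of the rows `|01⟩` and `|10⟩`, so its
`K*K` is diagonal in the Fock basis, with weight `2 C(N,l) / 2^N` at `|N−k,k⟩` and
`2 C(N,k) / 2^N` at `|N−l,l⟩`. At a Fock state `|m,n⟩ ≠ |0,0⟩` only `N = m + n` contributes:
for odd `n` the terms with `k = n` add up to `2 / 2^N · Σ_{l even} C(N,l)`, for even `n` those
with `l = n` add up to `2 / 2^N · Σ_{k odd} C(N,k)`, and both parity sums are `2^(N-1)` because
the alternating sum of binomial coefficients vanishes for `N ≥ 1`. The vacuum is taken care of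
by `K⁽⁰⁾` alone. -/

open scoped BigOperators

/-- The Kraus operator `K⁽⁰⁾ = |00⟩⟨0,0|`, as a (possibly infinite) matrix with rows
indexed by the two-qubit basis and columns by the two-mode Fock basis. -/
noncomputable def K0 : (Fin 2 × Fin 2) → (ℕ × ℕ) → ℂ :=
  fun q f => if q = (0, 0) ∧ f = (0, 0) then 1 else 0

/-- The Kraus operator
`K⁽ᴺ⁾ₖ,ₗ = (√2/√(2^N)) ( √C(N,l) |01⟩⟨N−k, k| + √C(N,k) |10⟩⟨N−l, l| )`. -/
noncomputable def KNkl (N k l : ℕ) : (Fin 2 × Fin 2) → (ℕ × ℕ) → ℂ :=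
  fun q f =>
    ((Real.sqrt 2 : ℂ) / (Real.sqrt (2 ^ N) : ℂ)) *
      ((if q = (0, 1) ∧ f = (N - k, k) then (Real.sqrt (N.choose l) : ℂ) else 0) +
       (if q = (1, 0) ∧ f = (N - l, l) then (Real.sqrt (N.choose k) : ℂ) else 0))

/-- The index set of the Kraus operators `K⁽ᴺ⁾ₖ,ₗ`: `N ≥ 1`, `k` odd, `l` even,
`0 ≤ k, l ≤ N`. -/
def KrausIdx : Type :=
  {t : ℕ × ℕ × ℕ // 1 ≤ t.1 ∧ Odd t.2.1 ∧ t.2.1 ≤ t.1 ∧ Even t.2.2 ∧ t.2.2 ≤ t.1}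

/-- The `(f, f')` entry of `K* K` for a Kraus operator `K`. -/
noncomputable def gramEntry (K : (Fin 2 × Fin 2) → (ℕ × ℕ) → ℂ) (f f' : ℕ × ℕ) : ℂ :=
  ∑ q : Fin 2 × Fin 2, (starRingEnd ℂ) (K q f) * K q f'

theorem tsum_subtype_eq_sum_filter {α β : Type*} [AddCommMonoid α] [TopologicalSpace α]
    {p : β → Prop} [DecidablePred p] (g : β → α) (s : Finset β)
    (hs : ∀ b, p b → g b ≠ 0 → b ∈ s) :
    ∑' b : {b // p b}, g b = ∑ b ∈ s with p b, g b := by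
  rw [tsum_eq_sum (s := s.subtype p), Finset.sum_subtype_eq_sum_filter]
  intro b hb
  by_contra hgb
  exact hb (Finset.mem_subtype.mpr (hs b b.2 hgb))

theorem Nat.sum_range_choose_filter_even_eq_odd {N : ℕ} (hN : N ≠ 0) :
    ∑ i ∈ Finset.range (N + 1) with Even i, N.choose i =
      ∑ i ∈ Finset.range (N + 1) with Odd i, N.choose i := by
  have parity_split : ∀ i, (-1 : ℤ) ^ i * N.choose i =
      (if Even i then (N.choose i : ℤ) else 0) - (if Odd i then (N.choose i : ℤ) else 0) := by
    intro i
    rcases Nat.even_or_odd i with hi | hi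
    · simp [hi, hi.neg_one_pow, Nat.not_odd_iff_even.mpr hi]
    · simp [hi, hi.neg_one_pow, Nat.not_even_iff_odd.mpr hi]
  have halt := Int.alternating_sum_range_choose_of_ne hN
  rw [Finset.sum_congr rfl fun i _ => parity_split i, Finset.sum_sub_distrib,
    ← Finset.sum_filter, ← Finset.sum_filter, sub_eq_zero] at halt
  exact_mod_cast halt

theorem Nat.two_mul_sum_range_choose_filter_even {N : ℕ} (hN : N ≠ 0) :
    2 * ∑ i ∈ Finset.range (N + 1) with Even i, N.choose i = 2 ^ N := by
  have h := Finset.sum_filter_add_sum_filter_not (Finset.range (N + 1)) Even (N.choose ·)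
  simp only [Nat.not_even_iff_odd, ← Nat.sum_range_choose_filter_even_eq_odd hN,
    Nat.sum_range_choose] at h
  omega

theorem sum_odd_sum_even_ite_choose (N n : ℕ) (hn : n ≤ N) (hN : N ≠ 0) :
    ∑ k ∈ Finset.range (N + 1) with Odd k, ∑ l ∈ Finset.range (N + 1) with Even l,
      ((if n = k then (N.choose l : ℂ) else 0) + (if n = l then (N.choose k : ℂ) else 0)) =
      2 ^ N / 2 := by
  have hEven : ∑ l ∈ Finset.range (N + 1) with Even l, (N.choose l : ℂ) = 2 ^ N / 2 := by
    rw [eq_div_iff two_ne_zero, mul_comm]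
    exact_mod_cast Nat.two_mul_sum_range_choose_filter_even hN
  have hOdd : ∑ k ∈ Finset.range (N + 1) with Odd k, (N.choose k : ℂ) = 2 ^ N / 2 := by
    rw [← hEven]
    exact_mod_cast (Nat.sum_range_choose_filter_even_eq_odd hN).symm
  simp only [Finset.sum_add_distrib, ← Finset.ite_sum_zero, Finset.sum_ite_eq, Finset.mem_filter,
    Finset.mem_range, Nat.lt_succ_of_le hn, true_and]
  rcases Nat.even_or_odd n with hn | hn
  · simp [hn, Nat.not_odd_iff_even.mpr hn, hOdd]
  · simp [hn, Nat.not_even_iff_odd.mpr hn, hEven]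

theorem mk_eq_sub_mk_iff {m n N k : ℕ} (hk : k ≤ N) :
    (m, n) = (N - k, k) ↔ m + n = N ∧ n = k := by
  simp only [Prod.ext_iff]
  omega

theorem gramEntry_K0 (f f' : ℕ × ℕ) :
    gramEntry K0 f f' = if f = (0, 0) ∧ f' = (0, 0) then 1 else 0 := by
  simp only [gramEntry, K0, Fintype.sum_prod_type, Fin.sum_univ_two, Prod.mk.injEq]
  split_ifs <;> simp_all

theorem sqrt_two_div_sqrt_two_pow_mul_sqrt_mul_self (N m : ℕ) :
    ((Real.sqrt 2 : ℂ) / (Real.sqrt (2 ^ N) : ℂ) * (Real.sqrt m : ℂ)) *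
      ((Real.sqrt 2 : ℂ) / (Real.sqrt (2 ^ N) : ℂ) * (Real.sqrt m : ℂ)) = 2 / 2 ^ N * m := by
  rw [mul_mul_mul_comm, div_mul_div_comm]
  norm_cast
  rw [Real.mul_self_sqrt zero_le_two, Real.mul_self_sqrt (by positivity),
    Real.mul_self_sqrt (Nat.cast_nonneg m)]
  push_cast
  ring

theorem gramEntry_KNkl (N k l : ℕ) (f f' : ℕ × ℕ) :
    gramEntry (KNkl N k l) f f' =
      (2 / 2 ^ N : ℂ) *
        ((if f = (N - k, k) ∧ f' = (N - k, k) then (N.choose l : ℂ) else 0) +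
         (if f = (N - l, l) ∧ f' = (N - l, l) then (N.choose k : ℂ) else 0)) := by
  simp only [gramEntry, KNkl, Fintype.sum_prod_type, Fin.sum_univ_two, Prod.mk.injEq,
    Fin.isValue, zero_ne_one, one_ne_zero, and_true, and_false, true_and, false_and, if_false,
    add_zero, zero_add, mul_zero, map_zero, mul_ite, mul_add]
  congr 1 <;> split_ifs <;> simp_all [sqrt_two_div_sqrt_two_pow_mul_sqrt_mul_self]

theorem gramEntry_KNkl_diag {N k l : ℕ} (hk : k ≤ N) (hl : l ≤ N) (m n : ℕ) :
    gramEntry (KNkl N k l) (m, n) (m, n) =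
      if m + n = N then
        2 / 2 ^ N * ((if n = k then (N.choose l : ℂ) else 0) + (if n = l then (N.choose k : ℂ) else 0))
      else 0 := by
  simp only [gramEntry_KNkl, and_self, mk_eq_sub_mk_iff hk, mk_eq_sub_mk_iff hl]
  split_ifs <;> simp_all

theorem tsum_gramEntry_KNkl_of_ne {f f' : ℕ × ℕ} (h : f ≠ f') :
    ∑' t : KrausIdx, gramEntry (KNkl t.1.1 t.1.2.1 t.1.2.2) f f' = 0 := by
  refine (tsum_congr fun t => ?_).trans tsum_zero
  rw [gramEntry_KNkl, if_neg fun h' => h (h'.1.trans h'.2.symm),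
    if_neg fun h' => h (h'.1.trans h'.2.symm), add_zero, mul_zero]

theorem tsum_gramEntry_KNkl_vacuum :
    ∑' t : KrausIdx, gramEntry (KNkl t.1.1 t.1.2.1 t.1.2.2) (0, 0) (0, 0) = 0 := by
  refine (tsum_congr fun t => ?_).trans tsum_zero
  obtain ⟨⟨N, k, l⟩, hN, -, hkN, -, hlN⟩ := t
  dsimp only at hN hkN hlN
  rw [gramEntry_KNkl_diag hkN hlN, if_neg (by omega)]

theorem filter_isKrausIndex_eq_product {N : ℕ} (hN : N ≠ 0) :
    {t ∈ {N} ×ˢ Finset.range (N + 1) ×ˢ Finset.range (N + 1) |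
        1 ≤ t.1 ∧ Odd t.2.1 ∧ t.2.1 ≤ t.1 ∧ Even t.2.2 ∧ t.2.2 ≤ t.1} =
      {N} ×ˢ {k ∈ Finset.range (N + 1) | Odd k} ×ˢ {l ∈ Finset.range (N + 1) | Even l} := by
  ext ⟨N', k, l⟩
  simp only [Finset.mem_filter, Finset.mem_product, Finset.mem_singleton, Finset.mem_range]
  constructor
  · rintro ⟨⟨rfl, -, -⟩, -, hk, hkN, hl, hlN⟩
    exact ⟨rfl, ⟨by omega, hk⟩, by omega, hl⟩
  · rintro ⟨rfl, ⟨hkN, hk⟩, hlN, hl⟩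
    exact ⟨⟨rfl, hkN, hlN⟩, Nat.one_le_iff_ne_zero.mpr hN, hk, by omega, hl, by omega⟩

theorem tsum_gramEntry_KNkl_diag {m n : ℕ} (h : (m, n) ≠ (0, 0)) :
    ∑' t : KrausIdx, gramEntry (KNkl t.1.1 t.1.2.1 t.1.2.2) (m, n) (m, n) = 1 := by
  obtain ⟨N, hmn⟩ : ∃ N, m + n = N := ⟨_, rfl⟩
  have hN : N ≠ 0 := by contrapose! h; simp only [Prod.ext_iff]; omega
  let g : ℕ × ℕ × ℕ → ℂ := fun t => gramEntry (KNkl t.1 t.2.1 t.2.2) (m, n) (m, n)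
  have hsupp : ∀ t : ℕ × ℕ × ℕ, (1 ≤ t.1 ∧ Odd t.2.1 ∧ t.2.1 ≤ t.1 ∧ Even t.2.2 ∧ t.2.2 ≤ t.1) →
      g t ≠ 0 → t ∈ {N} ×ˢ Finset.range (N + 1) ×ˢ Finset.range (N + 1) := by
    rintro ⟨N', k, l⟩ ⟨-, -, hk, -, hl⟩ hg
    dsimp only at hk hl
    have hN' : N' = N := by_contra fun hne =>
      hg (by simp only [g, gramEntry_KNkl_diag hk hl, hmn, if_neg (Ne.symm hne)])
    simp only [hN', Finset.mem_product, Finset.mem_singleton, Finset.mem_range, true_and]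
    omega
  calc ∑' t : KrausIdx, g t.1
      = ∑ k ∈ Finset.range (N + 1) with Odd k, ∑ l ∈ Finset.range (N + 1) with Even l, g (N, k, l) := by
        refine (tsum_subtype_eq_sum_filter g _ hsupp).trans ?_
        rw [filter_isKrausIndex_eq_product hN,
          Finset.sum_product, Finset.sum_singleton, Finset.sum_product]
    _ = 2 / 2 ^ N * ∑ k ∈ Finset.range (N + 1) with Odd k, ∑ l ∈ Finset.range (N + 1) with Even l,
          ((if n = k then (N.choose l : ℂ) else 0) + (if n = l then (N.choose k : ℂ) else 0)) := by
        simp only [Finset.mul_sum]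
        refine Finset.sum_congr rfl fun k hk => Finset.sum_congr rfl fun l hl => ?_
        simp only [Finset.mem_filter, Finset.mem_range] at hk hl
        dsimp only [g]
        rw [gramEntry_KNkl_diag (Nat.lt_succ_iff.mp hk.1) (Nat.lt_succ_iff.mp hl.1),
          if_pos hmn]
    _ = 1 := by
        rw [sum_odd_sum_even_ite_choose N n (by omega) hN]
        field_simp

/-- The Kraus operators `K⁽⁰⁾` and `K⁽ᴺ⁾ₖ,ₗ` (over all `N ≥ 1`,
odd `k ≤ N`, even `l ≤ N`) satisfy `Σ K*K = 𝟙` on the two-mode Fock space, i.e. the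
associated squashing map is trace-preserving. -/
theorem squashing_map_trace_preserving (f f' : ℕ × ℕ) :
    gramEntry K0 f f' +
      (∑' t : KrausIdx, gramEntry (KNkl t.1.1 t.1.2.1 t.1.2.2) f f') =
    if f = f' then 1 else 0 := by
  by_cases hff : f = f'
  · subst hff
    rw [if_pos rfl, gramEntry_K0]
    by_cases h0 : f = (0, 0)
    · rw [if_pos ⟨h0, h0⟩, h0, tsum_gramEntry_KNkl_vacuum, add_zero]
    · obtain ⟨m, n⟩ := f
      rw [if_neg fun h => h0 h.1, tsum_gramEntry_KNkl_diag h0, zero_add]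
  · rw [gramEntry_K0, if_neg fun h => hff (h.1.trans h.2.symm), tsum_gramEntry_KNkl_of_ne hff,
      if_neg hff, add_zero]
end

section
/- If a QKD protocol is ε_cor-correct (Pr[K_A ≠ K_B and accept] ≤ ε_cor) and ε_sec-secret (½‖(ρ_∧Ω)_{K_A E} − τ_{K_A} ⊗ (ρ_∧Ω)_E‖₁ ≤ ε_sec), then it is (ε_cor + ε_sec)-sound: ½‖(ρ_∧Ω)_{K_A K_B E} − τ_{K_A K_B} ⊗ (ρ_∧Ω)_E‖₁ ≤ ε_cor + ε_sec, where τ_{K_A K_B} = 2^{−l} Σ_k |kk⟩⟨kk| is the ideal pair of identical uniform keys. -/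
open Matrix ComplexOrder
open scoped BigOperators

/-- The trace norm `‖M‖₁ = tr √(MᴴM)` of a complex matrix. -/
noncomputable def traceNorm {n : Type*} [Fintype n] [DecidableEq n]
    (M : Matrix n n ℂ) : ℝ :=
  ((Matrix.posSemidef_conjTranspose_mul_self M).1.eigenvectorUnitary.1 *
    diagonal (fun i => ((Real.sqrt ((Matrix.posSemidef_conjTranspose_mul_self M).1.eigenvalues i) : ℝ) : ℂ)) *
    (star (Matrix.posSemidef_conjTranspose_mul_self M).1.eigenvectorUnitary : Matrix n n ℂ)).trace.re

/-- The subnormalised classical-quantum state `ρ_{K_A K_B E}` built from the blocks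
`σ k k'` (the state conditioned on the protocol accepting). -/
noncomputable def cqState {K E : Type*} [Fintype K] [DecidableEq K]
    (σ : K → K → Matrix E E ℂ) : Matrix ((K × K) × E) ((K × K) × E) ℂ :=
  Matrix.of fun p q => if p.1 = q.1 then σ p.1.1 p.1.2 p.2 q.2 else 0

/-- The ideal state `τ_{K_A K_B} ⊗ ρ_E`: a pair of identical uniform keys in tensor
product with the reduced state on `E`. -/
noncomputable def idealPairState {K E : Type*} [Fintype K] [DecidableEq K] [Fintype E]
    (σ : K → K → Matrix E E ℂ) : Matrix ((K × K) × E) ((K × K) × E) ℂ :=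
  Matrix.of fun p q =>
    if p.1 = q.1 ∧ p.1.1 = p.1.2 then
      ((Fintype.card K : ℂ))⁻¹ * ∑ a : K, ∑ b : K, σ a b p.2 q.2
    else 0

/-- The marginal `ρ_{K_A E}` of the subnormalised state. -/
noncomputable def cqStateA {K E : Type*} [Fintype K] [DecidableEq K]
    (σ : K → K → Matrix E E ℂ) : Matrix (K × E) (K × E) ℂ :=
  Matrix.of fun p q => if p.1 = q.1 then ∑ k' : K, σ p.1 k' p.2 q.2 else 0

/-- The ideal state `τ_{K_A} ⊗ ρ_E`. -/
noncomputable def idealAState {K E : Type*} [Fintype K] [DecidableEq K] [Fintype E]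
    (σ : K → K → Matrix E E ℂ) : Matrix (K × E) (K × E) ℂ :=
  Matrix.of fun p q =>
    if p.1 = q.1 then ((Fintype.card K : ℂ))⁻¹ * ∑ a : K, ∑ b : K, σ a b p.2 q.2
    else 0

/-!
Both deviations from the ideal states are block diagonal in the key registers, so their trace
norms split into sums of blockwise trace norms. For a mismatched key pair `k ≠ k'` the block is
`σ k k' ≥ 0`, whose trace norm is its trace. For `k = k'` it is
`σ k k - 2^{-l} ρ_E = (∑_{k'} σ k k' - 2^{-l} ρ_E) - ∑_{k' ≠ k} σ k k'`, whose first summand is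
the `k`-th block of the secrecy deviation; decomposing a Hermitian `X` as `X⁺ - X⁻` gives
`‖X - N‖₁ ≤ ‖X‖₁ + tr N` for `N ≥ 0`. Hence the soundness deviation is at most the secrecy
deviation plus twice the probability of accepting mismatched keys.
-/

open scoped MatrixOrder

namespace Matrix
variable {n : Type*} [Fintype n] [DecidableEq n]

lemma traceNorm_eq_re_trace_abs (M : Matrix n n ℂ) : traceNorm M = (CFC.abs M).trace.re := by
  have hM := posSemidef_conjTranspose_mul_self M
  rw [CFC.abs, star_eq_conjTranspose, CFC.sqrt_eq_real_sqrt _ hM.nonneg, cfcₙ_eq_cfc,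
    hM.1.cfc_eq, IsHermitian.cfc, Unitary.conjStarAlgAut_apply]
  rfl

lemma IsHermitian.trace_cfc {𝕜 : Type*} [RCLike 𝕜] {A : Matrix n n 𝕜} (hA : A.IsHermitian)
    (f : ℝ → ℝ) : (cfc f A).trace = ∑ i, (f (hA.eigenvalues i) : 𝕜) := by
  rw [hA.cfc_eq, IsHermitian.cfc, Unitary.conjStarAlgAut_apply, trace_mul_cycle,
    Unitary.coe_star_mul_self, one_mul, trace_diagonal]
  rfl

lemma IsHermitian.traceNorm_eq_sum_abs_eigenvalues {A : Matrix n n ℂ} (hA : A.IsHermitian) :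
    traceNorm A = ∑ i, |hA.eigenvalues i| := by
  rw [traceNorm_eq_re_trace_abs, CFC.abs_eq_cfc_norm A hA, hA.trace_cfc, Complex.re_sum]
  simp

lemma trace_eq_sum_eigenvectorBasis {𝕜 : Type*} [RCLike 𝕜] {A : Matrix n n 𝕜}
    (hA : A.IsHermitian) (P : Matrix n n 𝕜) :
    P.trace = ∑ i, star ⇑(hA.eigenvectorBasis i) ⬝ᵥ (P *ᵥ ⇑(hA.eigenvectorBasis i)) := by
  have := LinearMap.trace_eq_sum_inner (toEuclideanLin P) hA.eigenvectorBasis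
  rw [toEuclideanLin_eq_toLin_orthonormal, trace_toLin_eq,
    ← toEuclideanLin_eq_toLin_orthonormal] at this
  simpa [EuclideanSpace.inner_eq_star_dotProduct, dotProduct_comm] using this

lemma traceNorm_of_posSemidef {P : Matrix n n ℂ} (hP : P.PosSemidef) :
    traceNorm P = P.trace.re := by
  rw [traceNorm_eq_re_trace_abs, CFC.abs_of_nonneg P hP.nonneg]

lemma PosSemidef.traceNorm_sub_le {P N : Matrix n n ℂ} (hP : P.PosSemidef) (hN : N.PosSemidef) :
    traceNorm (P - N) ≤ P.trace.re + N.trace.re := by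
  have hC := hP.isHermitian.sub hN.isHermitian
  rw [hC.traceNorm_eq_sum_abs_eigenvalues, trace_eq_sum_eigenvectorBasis hC P,
    trace_eq_sum_eigenvectorBasis hC N, Complex.re_sum, Complex.re_sum, ← Finset.sum_add_distrib]
  gcongr with i
  have hp := (Complex.le_def.mp (hP.dotProduct_mulVec_nonneg (hC.eigenvectorBasis i))).1
  have hn := (Complex.le_def.mp (hN.dotProduct_mulVec_nonneg (hC.eigenvectorBasis i))).1
  rw [hC.eigenvalues_eq, sub_mulVec, dotProduct_sub, RCLike.re_to_complex, Complex.sub_re]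
  simp only [Complex.zero_re] at hp hn
  rw [abs_le]; constructor <;> linarith

lemma IsHermitian.traceNorm_sub_posSemidef_le {X N : Matrix n n ℂ} (hX : X.IsHermitian)
    (hN : N.PosSemidef) : traceNorm (X - N) ≤ traceNorm X + N.trace.re := by
  have hX' : IsSelfAdjoint X := hX
  have hXpos : (X⁺).PosSemidef := (CFC.posPart_nonneg X).posSemidef
  have hXneg : (X⁻).PosSemidef := (CFC.negPart_nonneg X).posSemidef
  calc traceNorm (X - N) = traceNorm (X⁺ - (X⁻ + N)) := by
        rw [sub_add_eq_sub_sub, CFC.posPart_sub_negPart X hX']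
    _ ≤ (X⁺).trace.re + (X⁻ + N).trace.re := hXpos.traceNorm_sub_le (hXneg.add hN)
    _ = traceNorm X + N.trace.re := by
        rw [traceNorm_eq_re_trace_abs, ← CFC.posPart_add_negPart X hX', trace_add, trace_add,
          Complex.add_re, Complex.add_re, add_assoc]

section BlockDiagonal

variable {ι m α : Type*} [DecidableEq ι]

/-- `Matrix.blockDiagonal` puts the block index second; the states here carry it first. -/
def blockDiagonalLeft [Zero α] (B : ι → Matrix m m α) : Matrix (ι × m) (ι × m) α :=
  of fun p q => if p.1 = q.1 then B p.1 p.2 q.2 else 0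

lemma blockDiagonalLeft_mul [Fintype ι] [Fintype m] [NonUnitalNonAssocSemiring α]
    (B C : ι → Matrix m m α) :
    blockDiagonalLeft B * blockDiagonalLeft C = blockDiagonalLeft (B * C) := by
  ext ⟨i, a⟩ ⟨j, b⟩
  simp only [blockDiagonalLeft, mul_apply, of_apply, Fintype.sum_prod_type, Pi.mul_apply]
  rw [Finset.sum_eq_single i (fun k _ hk => by simp [Ne.symm hk]) (by simp)]
  split_ifs <;> simp_all

lemma star_blockDiagonalLeft [AddMonoid α] [StarAddMonoid α] (B : ι → Matrix m m α) :
    star (blockDiagonalLeft B) = blockDiagonalLeft (star B) := by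
  ext ⟨i, a⟩ ⟨j, b⟩
  simp only [blockDiagonalLeft, star_apply, of_apply, Pi.star_apply]
  by_cases h : i = j
  · subst h; simp
  · simp [h, Ne.symm h]

lemma trace_blockDiagonalLeft [Fintype ι] [Fintype m] [AddCommMonoid α]
    (B : ι → Matrix m m α) :
    (blockDiagonalLeft B).trace = ∑ i, (B i).trace := by
  simp [trace, blockDiagonalLeft, Fintype.sum_prod_type]

variable [Fintype ι]

lemma blockDiagonalLeft_nonneg {B : ι → Matrix n n ℂ} (hB : 0 ≤ B) :
    0 ≤ blockDiagonalLeft B := by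
  have hsq : B = star (CFC.sqrt ∘ B) * (CFC.sqrt ∘ B) := funext fun i => by
    simp [(CFC.sqrt_nonneg (B i)).isSelfAdjoint.star_eq, CFC.sqrt_mul_sqrt_self _ (hB i)]
  rw [hsq, ← blockDiagonalLeft_mul, ← star_blockDiagonalLeft]
  exact star_mul_self_nonneg _

lemma abs_blockDiagonalLeft (B : ι → Matrix n n ℂ) :
    CFC.abs (blockDiagonalLeft B) = blockDiagonalLeft (CFC.abs ∘ B) := by
  refine CFC.sqrt_unique ?_ (blockDiagonalLeft_nonneg fun i => CFC.abs_nonneg (B i))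
  rw [blockDiagonalLeft_mul, star_blockDiagonalLeft, blockDiagonalLeft_mul]
  exact congrArg blockDiagonalLeft (funext fun i => CFC.abs_mul_abs (B i))

lemma traceNorm_blockDiagonalLeft (B : ι → Matrix n n ℂ) :
    traceNorm (blockDiagonalLeft B) = ∑ i, traceNorm (B i) := by
  simp only [traceNorm_eq_re_trace_abs, abs_blockDiagonalLeft, trace_blockDiagonalLeft,
    Complex.re_sum, Function.comp_apply]

end BlockDiagonal

lemma sum_traceNorm_sub_ite_le {ι : Type*} [Fintype ι] [DecidableEq ι] {f : ι → Matrix n n ℂ}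
    (hf : ∀ j, (f j).PosSemidef) {D : Matrix n n ℂ} (hD : D.IsHermitian) (k : ι) :
    ∑ j, traceNorm (f j - if k = j then D else 0)
      ≤ traceNorm (∑ j, f j - D) + 2 * ∑ j, if k ≠ j then (f j).trace.re else 0 := by
  rw [← Finset.sum_filter, Finset.filter_ne, ← Finset.add_sum_erase _ _ (Finset.mem_univ k),
    if_pos rfl]
  have hoff : ∑ j ∈ Finset.univ.erase k, traceNorm (f j - if k = j then D else 0)
      = ∑ j ∈ Finset.univ.erase k, (f j).trace.re :=
    Finset.sum_congr rfl fun j hj => by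
      rw [if_neg (Finset.ne_of_mem_erase hj).symm, sub_zero, traceNorm_of_posSemidef (hf j)]
  have hdiag : traceNorm (f k - D)
      ≤ traceNorm (∑ j, f j - D) + ∑ j ∈ Finset.univ.erase k, (f j).trace.re := by
    have hsplit : f k - D = (∑ j, f j - D) - ∑ j ∈ Finset.univ.erase k, f j := by
      rw [← Finset.add_sum_erase _ _ (Finset.mem_univ k)]; abel
    rw [hsplit, ← Complex.re_sum, ← trace_sum]
    exact ((posSemidef_sum _ fun j _ => hf j).isHermitian.sub hD).traceNorm_sub_posSemidef_le
      (posSemidef_sum _ fun j _ => hf j)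
  linarith

end Matrix

/-- The block `2^{-l} ρ_E` of `τ_{K_A} ⊗ ρ_E` at every key value. -/
noncomputable def idealBlock {K E : Type*} [Fintype K] (σ : K → K → Matrix E E ℂ) :
    Matrix E E ℂ :=
  (Fintype.card K : ℂ)⁻¹ • ∑ a, ∑ b, σ a b

lemma cqState_sub_idealPairState {K E : Type*} [Fintype K] [DecidableEq K] [Fintype E]
    (σ : K → K → Matrix E E ℂ) :
    cqState σ - idealPairState σ
      = blockDiagonalLeft fun kk : K × K =>
          σ kk.1 kk.2 - if kk.1 = kk.2 then idealBlock σ else 0 := by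
  ext ⟨⟨a, b⟩, e⟩ ⟨⟨a', b'⟩, e'⟩
  by_cases h : (a, b) = (a', b')
  · cases h
    by_cases hab : a = b <;>
      simp [cqState, idealPairState, blockDiagonalLeft, idealBlock, hab, Matrix.sum_apply]
  · simp [cqState, idealPairState, blockDiagonalLeft, h]

lemma cqStateA_sub_idealAState {K E : Type*} [Fintype K] [DecidableEq K] [Fintype E]
    (σ : K → K → Matrix E E ℂ) :
    cqStateA σ - idealAState σ = blockDiagonalLeft fun k => ∑ k', σ k k' - idealBlock σ := by
  ext ⟨a, e⟩ ⟨a', e'⟩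
  by_cases h : a = a'
  · subst h
    simp [cqStateA, idealAState, blockDiagonalLeft, idealBlock, Matrix.sum_apply]
  · simp [cqStateA, idealAState, blockDiagonalLeft, h]

lemma idealBlock_posSemidef {K E : Type*} [Fintype K] [Fintype E] {σ : K → K → Matrix E E ℂ}
    (hσ : ∀ k k', (σ k k').PosSemidef) : (idealBlock σ).PosSemidef :=
  (posSemidef_sum _ fun a _ => posSemidef_sum _ fun b _ => hσ a b).smul (by positivity)

theorem correct_and_secret_implies_sound_general
    {K E : Type*} [Fintype K] [DecidableEq K] [Fintype E] [DecidableEq E]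
    (σ : K → K → Matrix E E ℂ) (hσ : ∀ k k', (σ k k').PosSemidef)
    (εcor εsec : ℝ)
    (hcor : (∑ k : K, ∑ k' : K, if k ≠ k' then (σ k k').trace.re else 0) ≤ εcor)
    (hsec : (1 / 2 : ℝ) * traceNorm (cqStateA σ - idealAState σ) ≤ εsec) :
    (1 / 2 : ℝ) * traceNorm (cqState σ - idealPairState σ) ≤ εcor + εsec := by
  have hsound : traceNorm (cqState σ - idealPairState σ)
      ≤ traceNorm (cqStateA σ - idealAState σ)
        + 2 * ∑ k : K, ∑ k' : K, if k ≠ k' then (σ k k').trace.re else 0 := by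
    rw [cqState_sub_idealPairState, cqStateA_sub_idealAState, traceNorm_blockDiagonalLeft,
      traceNorm_blockDiagonalLeft, Fintype.sum_prod_type, Finset.mul_sum,
      ← Finset.sum_add_distrib]
    exact Finset.sum_le_sum fun k _ =>
      sum_traceNorm_sub_ite_le (hσ k) (idealBlock_posSemidef hσ).isHermitian k
  linarith

/-- If a QKD protocol is `ε_cor`-correct and `ε_sec`-secret, then it
is `(ε_cor + ε_sec)`-sound.  The accepted (subnormalised) output is modelled by PSD
blocks `σ k k'` for the key pair `(k, k')` of an `l`-bit key alphabet `K`. -/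
theorem correct_and_secret_implies_sound
    {K E : Type*} [Fintype K] [DecidableEq K] [Fintype E] [DecidableEq E]
    (l : ℕ) (hK : Fintype.card K = 2 ^ l)
    (σ : K → K → Matrix E E ℂ) (hσ : ∀ k k', (σ k k').PosSemidef)
    (εcor εsec : ℝ)
    (hcor : (∑ k : K, ∑ k' : K, if k ≠ k' then (σ k k').trace.re else 0) ≤ εcor)
    (hsec : (1 / 2 : ℝ) * traceNorm (cqStateA σ - idealAState σ) ≤ εsec) :
    (1 / 2 : ℝ) * traceNorm (cqState σ - idealPairState σ) ≤ εcor + εsec :=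
  correct_and_secret_implies_sound_general σ hσ εcor εsec hcor hsec
end
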